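/- arXiv:2211.07935 — 4 statements merged into one kernel-verified Lean document; each statement's English description precedes it below -/
import Mathlib

section
/- Let X be a real normed linear space, α, β ∈ [0,1) with 0 < α+β < 1, and u, v ∈ X. If ρ_{α,β}(u,v) = 0, then u is Birkhoff–James orthogonal to v, i.e., ‖u + tv‖ ≥ ‖u‖ for all t ∈ ℝ. -/
noncomputable def rhoP {X : Type*} [NormedAddCommGroup X] [NormedSpace ℝ X] (u v : X) : ℝ :=
  Filter.limUnder (nhdsWithin (0:ℝ) (Set.Ioi 0)) (fun t : ℝ => (‖u + t • v‖^2 - ‖u‖^2) / (2*t))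

noncomputable def rhoM {X : Type*} [NormedAddCommGroup X] [NormedSpace ℝ X] (u v : X) : ℝ :=
  Filter.limUnder (nhdsWithin (0:ℝ) (Set.Iio 0)) (fun t : ℝ => (‖u + t • v‖^2 - ‖u‖^2) / (2*t))

noncomputable def rhoAB {X : Type*} [NormedAddCommGroup X] [NormedSpace ℝ X]
    (α β : ℝ) (u v : X) : ℝ := α * rhoM u v + β * rhoP u v

/-!
Since `t ↦ ‖u + t • v‖ ^ 2` is convex, its difference quotient at `0` is monotone in `t ≠ 0`.
Hence both one-sided limits `ρ₋ ≤ ρ₊` exist, `ρ₊` bounds the quotient from below on `t > 0`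
and `ρ₋` bounds it from above on `t < 0`. A combination `α ρ₋ + β ρ₊` with nonnegative,
not both zero, weights can only vanish if `ρ₋ ≤ 0 ≤ ρ₊`, and then the quotient has the sign
of `t`, i.e. `‖u + t • v‖ ≥ ‖u‖` for all `t`.
-/

open Set Filter Topology

namespace BirkhoffJames

variable {X : Type*} [NormedAddCommGroup X] [NormedSpace ℝ X] (u v : X)

noncomputable def normSqSlope (t : ℝ) : ℝ := (‖u + t • v‖ ^ 2 - ‖u‖ ^ 2) / (2 * t)

theorem convexOn_norm_add_smul_sq : ConvexOn ℝ univ (fun t : ℝ => ‖u + t • v‖ ^ 2) := by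
  have hnorm : ConvexOn ℝ univ (fun t : ℝ => ‖u + t • v‖) := by
    simpa [Function.comp_def, AffineMap.lineMap_apply, add_comm] using
      (convexOn_norm convex_univ).comp_affineMap (AffineMap.lineMap u (u + v))
  exact hnorm.pow (fun _ _ => norm_nonneg _) 2

variable {u v}

theorem normSqSlope_mono {s t : ℝ} (hs : s ≠ 0) (ht : t ≠ 0) (hst : s ≤ t) :
    normSqSlope u v s ≤ normSqSlope u v t := by
  have h := (convexOn_norm_add_smul_sq u v).secant_mono (a := 0)
    (mem_univ _) (mem_univ _) (mem_univ _) hs ht hst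
  simp only [zero_smul, add_zero, sub_zero] at h
  simp only [normSqSlope, mul_comm (2 : ℝ), ← div_div]
  gcongr

theorem tendsto_normSqSlope_rhoP : Tendsto (normSqSlope u v) (𝓝[>] 0) (𝓝 (rhoP u v)) := by
  have hmono : MonotoneOn (normSqSlope u v) (Ioi 0) := fun s hs t ht hst =>
    normSqSlope_mono (ne_of_gt hs) (ne_of_gt ht) hst
  have hbdd : BddBelow (normSqSlope u v '' Ioi 0) := by
    refine ⟨normSqSlope u v (-1), ?_⟩
    rintro _ ⟨t, ht, rfl⟩
    exact normSqSlope_mono (by norm_num) (ne_of_gt ht) (by linarith [mem_Ioi.mp ht])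
  have h := hmono.tendsto_nhdsGT hbdd
  rwa [← h.limUnder_eq] at h

theorem tendsto_normSqSlope_rhoM : Tendsto (normSqSlope u v) (𝓝[<] 0) (𝓝 (rhoM u v)) := by
  have hmono : MonotoneOn (normSqSlope u v) (Iio 0) := fun s hs t ht hst =>
    normSqSlope_mono (ne_of_lt hs) (ne_of_lt ht) hst
  have hbdd : BddAbove (normSqSlope u v '' Iio 0) := by
    refine ⟨normSqSlope u v 1, ?_⟩
    rintro _ ⟨t, ht, rfl⟩
    exact normSqSlope_mono (ne_of_lt ht) (by norm_num) (by linarith [mem_Iio.mp ht])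
  have h := hmono.tendsto_nhdsLT hbdd
  rwa [← h.limUnder_eq] at h

theorem rhoP_le_normSqSlope {t : ℝ} (ht : 0 < t) : rhoP u v ≤ normSqSlope u v t :=
  le_of_tendsto tendsto_normSqSlope_rhoP <| mem_of_superset (Ioo_mem_nhdsGT ht)
    fun _ hs => normSqSlope_mono (ne_of_gt hs.1) (ne_of_gt ht) hs.2.le

theorem normSqSlope_le_rhoM {t : ℝ} (ht : t < 0) : normSqSlope u v t ≤ rhoM u v :=
  ge_of_tendsto tendsto_normSqSlope_rhoM <| mem_of_superset (Ioo_mem_nhdsLT ht)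
    fun _ hs => normSqSlope_mono (ne_of_lt ht) (ne_of_lt hs.2) hs.1.le

theorem rhoM_le_normSqSlope {t : ℝ} (ht : 0 < t) : rhoM u v ≤ normSqSlope u v t :=
  le_of_tendsto tendsto_normSqSlope_rhoM <| eventually_mem_nhdsWithin.mono
    fun _ hs => normSqSlope_mono (ne_of_lt hs) (ne_of_gt ht) (hs.out.trans ht).le

theorem rhoM_le_rhoP : rhoM u v ≤ rhoP u v :=
  ge_of_tendsto tendsto_normSqSlope_rhoP <| eventually_mem_nhdsWithin.mono
    fun _ ht => rhoM_le_normSqSlope ht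

theorem norm_le_norm_add_smul_of_rhoM_nonpos_of_rhoP_nonneg (hM : rhoM u v ≤ 0)
    (hP : 0 ≤ rhoP u v) (t : ℝ) : ‖u‖ ≤ ‖u + t • v‖ := by
  suffices h : 0 ≤ ‖u + t • v‖ ^ 2 - ‖u‖ ^ 2 by
    exact (sq_le_sq₀ (norm_nonneg _) (norm_nonneg _)).1 (by linarith)
  rcases lt_trichotomy t 0 with ht | rfl | ht
  · have hslope : normSqSlope u v t ≤ 0 := (normSqSlope_le_rhoM ht).trans hM
    rw [normSqSlope, div_le_iff_of_neg (by linarith)] at hslope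
    linarith
  · simp
  · have hslope : 0 ≤ normSqSlope u v t := hP.trans (rhoP_le_normSqSlope ht)
    rw [normSqSlope, le_div_iff₀ (by linarith)] at hslope
    linarith

end BirkhoffJames

open BirkhoffJames in
theorem stmt_5_general {X : Type*} [NormedAddCommGroup X] [NormedSpace ℝ X]
    (u v : X)
    (α β : ℝ) (hα : α ∈ Set.Ico (0:ℝ) 1) (hβ : β ∈ Set.Ico (0:ℝ) 1)
    (hab : 0 < α + β)
    (h : rhoAB α β u v = 0) :
    ∀ t : ℝ, ‖u + t • v‖ ≥ ‖u‖ := by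
  rw [rhoAB] at h
  have hle : rhoM u v ≤ rhoP u v := rhoM_le_rhoP
  have hM : rhoM u v ≤ 0 := by
    have : (α + β) * rhoM u v ≤ 0 := by linarith [mul_le_mul_of_nonneg_left hle hβ.1]
    exact nonpos_of_mul_nonpos_right this hab
  have hP : 0 ≤ rhoP u v := by
    have : 0 ≤ (α + β) * rhoP u v := by linarith [mul_le_mul_of_nonneg_left hle hα.1]
    exact nonneg_of_mul_nonneg_right this hab
  exact norm_le_norm_add_smul_of_rhoM_nonpos_of_rhoP_nonneg hM hP

theorem stmt_5 {X : Type*} [NormedAddCommGroup X] [NormedSpace ℝ X]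
    (u v : X)
    (α β : ℝ) (hα : α ∈ Set.Ico (0:ℝ) 1) (hβ : β ∈ Set.Ico (0:ℝ) 1)
    (hab : 0 < α + β) (hab1 : α + β < 1)
    (h : rhoAB α β u v = 0) :
    ∀ t : ℝ, ‖u + t • v‖ ≥ ‖u‖ :=
  stmt_5_general u v α β hα hβ hab h
end

section
/- In ℝ² with the max norm ‖(x,y)‖ = max{|x|,|y|}, the vectors u = (1,1) and v = (1,−1) are Birkhoff–James orthogonal, but for α = 1/2, β = 1/3, ρ_{α,β}(u,v) = −α + β ≠ 0, so u is not ρ_{α,β}-orthogonal to v. Hence Birkhoff–James orthogonality does not imply ρ_{α,β}-orthogonality in general. -/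
/-! The norm of `(1, 1) + t • (1, -1) = (1 + t, 1 - t)` is `1 + |t|`, which is minimal at `t = 0`
but has a corner there, with slopes `1` and `-1`. Where a norm is affine with slope `c` on one
side of `0`, the difference quotient of `‖u + t • v‖ ^ 2` equals `‖u‖ * c + c ^ 2 * t / 2`, so the
one-sided limit is `‖u‖ * c`; hence `ρ₊ = 1` and `ρ₋ = -1`. -/

open Filter Topology

section OneSided

variable {X : Type*} [NormedAddCommGroup X] [NormedSpace ℝ X] {u v : X} {c : ℝ}

theorem tendsto_normSq_slope_of_norm_add_smul {l : Filter ℝ} (hl : l ≤ 𝓝[≠] 0)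
    (h : ∀ᶠ t in l, ‖u + t • v‖ = ‖u‖ + c * t) :
    Tendsto (fun t : ℝ => (‖u + t • v‖ ^ 2 - ‖u‖ ^ 2) / (2 * t)) l (𝓝 (‖u‖ * c)) := by
  have hne : ∀ᶠ t in l, t ≠ 0 := hl self_mem_nhdsWithin
  have hquot : ∀ᶠ t in l,
      ‖u‖ * c + c ^ 2 * t / 2 = (‖u + t • v‖ ^ 2 - ‖u‖ ^ 2) / (2 * t) := by
    filter_upwards [h, hne] with t ht ht0
    rw [ht]
    field_simp
    ring
  have hlim : Tendsto (fun t : ℝ => ‖u‖ * c + c ^ 2 * t / 2) (𝓝 0) (𝓝 (‖u‖ * c)) := by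
    simpa using ((continuous_const.mul continuous_id).div_const 2).const_add (‖u‖ * c)
      |>.tendsto (0 : ℝ)
  exact (hlim.mono_left (hl.trans nhdsWithin_le_nhds)).congr' hquot

theorem rhoP_eq_of_norm_add_smul (h : ∀ᶠ t in 𝓝[>] 0, ‖u + t • v‖ = ‖u‖ + c * t) :
    rhoP u v = ‖u‖ * c :=
  (tendsto_normSq_slope_of_norm_add_smul
    (nhdsWithin_mono (s := Set.Ioi 0) _ fun _ ht => ne_of_gt ht) h).limUnder_eq

theorem rhoM_eq_of_norm_add_smul (h : ∀ᶠ t in 𝓝[<] 0, ‖u + t • v‖ = ‖u‖ + c * t) :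
    rhoM u v = ‖u‖ * c :=
  (tendsto_normSq_slope_of_norm_add_smul
    (nhdsWithin_mono (s := Set.Iio 0) _ fun _ ht => ne_of_lt ht) h).limUnder_eq

end OneSided

theorem norm_one_one : ‖((1 : ℝ), (1 : ℝ))‖ = 1 := by
  simp [Prod.norm_def]

theorem norm_one_one_add_smul_one_neg_one (t : ℝ) :
    ‖((1 : ℝ), (1 : ℝ)) + t • ((1 : ℝ), (-1 : ℝ))‖ = 1 + |t| := by
  have hvec : ((1 : ℝ), (1 : ℝ)) + t • ((1 : ℝ), (-1 : ℝ)) = (1 + t, 1 - t) := by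
    ext <;> simp [sub_eq_add_neg]
  rw [hvec, Prod.norm_def, Real.norm_eq_abs, Real.norm_eq_abs]
  rcases le_or_gt 0 t with ht | ht
  · rw [abs_of_nonneg ht, abs_of_nonneg (by linarith),
      max_eq_left (abs_le.2 ⟨by linarith, by linarith⟩)]
  · rw [abs_of_neg ht, abs_of_nonneg (by linarith : (0 : ℝ) ≤ 1 - t),
      max_eq_right (abs_le.2 ⟨by linarith, by linarith⟩)]
    ring

theorem stmt_6 :
    let u : ℝ × ℝ := (1, 1)
    let v : ℝ × ℝ := (1, -1)
    (∀ t : ℝ, ‖u + t • v‖ ≥ ‖u‖) ∧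
    rhoAB (1/2 : ℝ) (1/3 : ℝ) u v = -(1/2 : ℝ) + 1/3 ∧
    rhoAB (1/2 : ℝ) (1/3 : ℝ) u v ≠ 0 := by
  intro u v
  have hnorm (t : ℝ) : ‖u + t • v‖ = ‖u‖ + |t| := by
    rw [norm_one_one_add_smul_one_neg_one, norm_one_one]
  have hP : rhoP u v = 1 := by
    have := rhoP_eq_of_norm_add_smul (u := u) (v := v) (c := 1) <| by
      filter_upwards [self_mem_nhdsWithin] with t (ht : 0 < t)
      rw [hnorm, abs_of_pos ht, one_mul]
    rwa [norm_one_one, one_mul] at this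
  have hM : rhoM u v = -1 := by
    have := rhoM_eq_of_norm_add_smul (u := u) (v := v) (c := -1) <| by
      filter_upwards [self_mem_nhdsWithin] with t (ht : t < 0)
      rw [hnorm, abs_of_neg ht, neg_one_mul]
    rwa [norm_one_one, one_mul] at this
  have hAB : rhoAB (1/2 : ℝ) (1/3 : ℝ) u v = -(1/2 : ℝ) + 1/3 := by
    rw [rhoAB, hP, hM]
    ring
  refine ⟨fun t => ?_, hAB, by rw [hAB]; norm_num⟩
  rw [hnorm]
  exact le_add_of_nonneg_right (abs_nonneg t)
end

section
/- Let X be a real normed linear space and α, β ∈ [0,1), α ≠ β, with 0 < α+β < 1. Then Birkhoff–James orthogonality coincides with ρ_{α,β}-orthogonality on X if and only if X is smooth (equivalently, ρ₋(u,v) = ρ₊(u,v) for all u, v ∈ X). -/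
/-!
The difference quotient `q(t) = (‖u + t v‖² - ‖u‖²) / (2t)` is the slope of a convex function of `t`
through `0`, hence monotone on `t ≠ 0`; so `ρ₋ ≤ ρ₊` exist as one-sided limits and `u ⊥_B v` iff
`ρ₋(u,v) ≤ 0 ≤ ρ₊(u,v)`. Replacing `v` by `c u + v` shifts both `ρ₋` and `ρ₊` by `c ‖u‖²`. For `u ≠ 0`
the two shifts making `ρ₊`, resp. `ρ₋`, vanish give Birkhoff–James orthogonal pairs, on which
`ρ_{α,β}` equals `α (ρ₋ - ρ₊)` resp. `β (ρ₊ - ρ₋)`; if both vanish then `(α + β)(ρ₊ - ρ₋) = 0`.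
Conversely, if `ρ₋ = ρ₊ = ρ` then both conditions say `ρ = 0`.
-/

open Set Filter Topology

section NormSqDiffQuot

variable {X : Type*} [NormedAddCommGroup X] [NormedSpace ℝ X]

noncomputable def normSqDiffQuot (u v : X) (t : ℝ) : ℝ := (‖u + t • v‖ ^ 2 - ‖u‖ ^ 2) / (2 * t)

def BirkhoffOrthogonal (u v : X) : Prop := ∀ t : ℝ, ‖u + t • v‖ ≥ ‖u‖

lemma convexOn_norm_add_smul_sq (u v : X) : ConvexOn ℝ univ (fun t : ℝ => ‖u + t • v‖ ^ 2) :=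
  ((convexOn_univ_norm.translate_right u).comp_linearMap
    (LinearMap.toSpanSingleton ℝ X v)).pow (fun _ _ => norm_nonneg _) 2

lemma normSqDiffQuot_mono (u v : X) {s t : ℝ} (hs : s ≠ 0) (ht : t ≠ 0) (hst : s ≤ t) :
    normSqDiffQuot u v s ≤ normSqDiffQuot u v t := by
  have h := (convexOn_norm_add_smul_sq u v).secant_mono (a := 0) (mem_univ _) (mem_univ _)
    (mem_univ _) hs ht hst
  simp only [zero_smul, add_zero, sub_zero] at h
  simp only [normSqDiffQuot, div_mul_eq_div_div_swap]
  exact div_le_div_of_nonneg_right h zero_le_two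

lemma tendsto_rhoP (u v : X) :
    Tendsto (normSqDiffQuot u v) (𝓝[>] 0) (𝓝 (rhoP u v)) := by
  have hmono : MonotoneOn (normSqDiffQuot u v) (Ioi 0) := fun s hs t ht hst =>
    normSqDiffQuot_mono u v hs.ne' ht.ne' hst
  have hbdd : BddBelow (normSqDiffQuot u v '' Ioi 0) := by
    refine ⟨normSqDiffQuot u v (-1), ?_⟩
    rintro _ ⟨t, ht, rfl⟩
    exact normSqDiffQuot_mono u v (by norm_num) ht.ne' (by linarith [mem_Ioi.mp ht])
  have h := hmono.tendsto_nhdsGT hbdd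
  rwa [← h.limUnder_eq] at h

lemma tendsto_rhoM (u v : X) :
    Tendsto (normSqDiffQuot u v) (𝓝[<] 0) (𝓝 (rhoM u v)) := by
  have hmono : MonotoneOn (normSqDiffQuot u v) (Iio 0) := fun s hs t ht hst =>
    normSqDiffQuot_mono u v hs.ne ht.ne hst
  have hbdd : BddAbove (normSqDiffQuot u v '' Iio 0) := by
    refine ⟨normSqDiffQuot u v 1, ?_⟩
    rintro _ ⟨t, ht, rfl⟩
    exact normSqDiffQuot_mono u v ht.ne (by norm_num) (by linarith [mem_Iio.mp ht])
  have h := hmono.tendsto_nhdsLT hbdd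
  rwa [← h.limUnder_eq] at h

lemma rhoP_le_normSqDiffQuot (u v : X) {t : ℝ} (ht : 0 < t) :
    rhoP u v ≤ normSqDiffQuot u v t := by
  refine le_of_tendsto (tendsto_rhoP u v) ?_
  filter_upwards [Ioo_mem_nhdsGT ht] with s hs
  exact normSqDiffQuot_mono u v hs.1.ne' ht.ne' hs.2.le

lemma normSqDiffQuot_le_rhoM (u v : X) {t : ℝ} (ht : t < 0) :
    normSqDiffQuot u v t ≤ rhoM u v := by
  refine ge_of_tendsto (tendsto_rhoM u v) ?_
  filter_upwards [Ioo_mem_nhdsLT ht] with s hs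
  exact normSqDiffQuot_mono u v ht.ne hs.2.ne hs.1.le

lemma rhoM_le_rhoP (u v : X) : rhoM u v ≤ rhoP u v := by
  have hM : ∀ t > 0, rhoM u v ≤ normSqDiffQuot u v t := fun t ht =>
    le_of_tendsto (tendsto_rhoM u v) <| eventually_nhdsWithin_of_forall fun s hs =>
      normSqDiffQuot_mono u v (ne_of_lt hs) ht.ne' (hs.le.trans ht.le)
  exact ge_of_tendsto (tendsto_rhoP u v) (eventually_nhdsWithin_of_forall hM)

lemma normSqDiffQuot_nonneg_iff (u v : X) {t : ℝ} (ht : 0 < t) :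
    0 ≤ normSqDiffQuot u v t ↔ ‖u‖ ≤ ‖u + t • v‖ := by
  rw [normSqDiffQuot, le_div_iff₀ (by positivity), zero_mul, sub_nonneg,
    sq_le_sq₀ (norm_nonneg _) (norm_nonneg _)]

lemma normSqDiffQuot_nonpos_iff (u v : X) {t : ℝ} (ht : t < 0) :
    normSqDiffQuot u v t ≤ 0 ↔ ‖u‖ ≤ ‖u + t • v‖ := by
  rw [normSqDiffQuot, div_le_iff_of_neg (by linarith), zero_mul, sub_nonneg,
    sq_le_sq₀ (norm_nonneg _) (norm_nonneg _)]

lemma birkhoffOrthogonal_iff (u v : X) :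
    BirkhoffOrthogonal u v ↔ rhoM u v ≤ 0 ∧ 0 ≤ rhoP u v := by
  constructor
  · intro h
    exact ⟨le_of_tendsto (tendsto_rhoM u v) <| eventually_nhdsWithin_of_forall fun t ht =>
        (normSqDiffQuot_nonpos_iff u v ht).2 (h t),
      ge_of_tendsto (tendsto_rhoP u v) <| eventually_nhdsWithin_of_forall fun t ht =>
        (normSqDiffQuot_nonneg_iff u v ht).2 (h t)⟩
  · rintro ⟨hM, hP⟩ t
    rcases lt_trichotomy t 0 with ht | rfl | ht
    · exact (normSqDiffQuot_nonpos_iff u v ht).1 ((normSqDiffQuot_le_rhoM u v ht).trans hM)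
    · simp
    · exact (normSqDiffQuot_nonneg_iff u v ht).1 (hP.trans (rhoP_le_normSqDiffQuot u v ht))

lemma normSqDiffQuot_zero_left (v : X) : normSqDiffQuot 0 v = fun t => t * ‖v‖ ^ 2 / 2 := by
  funext t
  rcases eq_or_ne t 0 with rfl | ht
  · simp [normSqDiffQuot]
  · simp only [normSqDiffQuot, zero_add, norm_smul, norm_zero, Real.norm_eq_abs, mul_pow, sq_abs]
    field_simp
    ring

lemma tendsto_normSqDiffQuot_zero_left (v : X) :
    Tendsto (normSqDiffQuot 0 v) (𝓝 0) (𝓝 0) := by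
  rw [normSqDiffQuot_zero_left]
  simpa using ((by fun_prop : Continuous fun t : ℝ => t * ‖v‖ ^ 2 / 2).tendsto 0)

lemma rhoP_zero_left (v : X) : rhoP 0 v = 0 :=
  ((tendsto_normSqDiffQuot_zero_left v).mono_left nhdsWithin_le_nhds).limUnder_eq

lemma rhoM_zero_left (v : X) : rhoM 0 v = 0 :=
  ((tendsto_normSqDiffQuot_zero_left v).mono_left nhdsWithin_le_nhds).limUnder_eq

/-- `u + t (c u + v) = (1 + t c) (u + s v)` with `s = t / (1 + t c)`. -/
lemma normSqDiffQuot_smul_add_self (u v : X) (c : ℝ) {t : ℝ} (ht : t ≠ 0)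
    (hpos : 0 < 1 + t * c) :
    normSqDiffQuot u (c • u + v) t =
      (1 + t * c) * normSqDiffQuot u v (t / (1 + t * c)) + (c + t * c ^ 2 / 2) * ‖u‖ ^ 2 := by
  have hvec : u + t • (c • u + v) = (1 + t * c) • (u + (t / (1 + t * c)) • v) := by
    rw [smul_add (1 + t * c), smul_smul (1 + t * c), mul_div_cancel₀ _ hpos.ne']
    module
  rw [normSqDiffQuot, normSqDiffQuot, hvec, norm_smul, mul_pow, Real.norm_eq_abs,
    abs_of_pos hpos]
  generalize ‖u + (t / (1 + t * c)) • v‖ ^ 2 = A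
  field_simp
  ring

lemma tendsto_normSqDiffQuot_smul_add_self {S : Set ℝ} (hS₀ : S ⊆ {0}ᶜ)
    (hS : ∀ t ∈ S, ∀ a : ℝ, 0 < a → a * t ∈ S) {u v : X} {r : ℝ}
    (h : Tendsto (normSqDiffQuot u v) (𝓝[S] 0) (𝓝 r)) (c : ℝ) :
    Tendsto (normSqDiffQuot u (c • u + v)) (𝓝[S] 0) (𝓝 (c * ‖u‖ ^ 2 + r)) := by
  have hcont : Continuous fun t : ℝ => 1 + t * c := by fun_prop
  have hscale : Tendsto (fun t : ℝ => 1 + t * c) (𝓝[S] 0) (𝓝 1) := by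
    simpa using (hcont.tendsto 0).mono_left nhdsWithin_le_nhds
  have hpos : ∀ᶠ t in 𝓝[S] 0, 0 < 1 + t * c := hscale.eventually (lt_mem_nhds one_pos)
  have hreparam : Tendsto (fun t : ℝ => t / (1 + t * c)) (𝓝[S] 0) (𝓝[S] 0) := by
    refine tendsto_nhdsWithin_iff.2 ⟨?_, ?_⟩
    · simpa [Pi.div_def] using (tendsto_nhdsWithin_of_tendsto_nhds tendsto_id).div hscale one_ne_zero
    · filter_upwards [hpos, self_mem_nhdsWithin] with t h₁ h₂
      rw [div_eq_inv_mul]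
      exact hS t h₂ _ (inv_pos.2 h₁)
  have hshift : Tendsto (fun t : ℝ => (c + t * c ^ 2 / 2) * ‖u‖ ^ 2) (𝓝[S] 0)
      (𝓝 (c * ‖u‖ ^ 2)) := by
    simpa using ((by fun_prop : Continuous fun t : ℝ => (c + t * c ^ 2 / 2) * ‖u‖ ^ 2).tendsto
      0).mono_left nhdsWithin_le_nhds
  have hlim := (hscale.mul (h.comp hreparam)).add hshift
  rw [one_mul, add_comm] at hlim
  refine hlim.congr' ?_
  filter_upwards [hpos, self_mem_nhdsWithin] with t h₁ h₂
  exact (normSqDiffQuot_smul_add_self u v c (hS₀ h₂) h₁).symm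

lemma rhoP_smul_add_self (u v : X) (c : ℝ) : rhoP u (c • u + v) = c * ‖u‖ ^ 2 + rhoP u v :=
  (tendsto_normSqDiffQuot_smul_add_self (S := Ioi 0) (fun _ ht => ne_of_gt ht)
    (fun _ ht _ ha => mul_pos ha ht) (tendsto_rhoP u v) c).limUnder_eq

lemma rhoM_smul_add_self (u v : X) (c : ℝ) : rhoM u (c • u + v) = c * ‖u‖ ^ 2 + rhoM u v :=
  (tendsto_normSqDiffQuot_smul_add_self (S := Iio 0) (fun _ ht => ne_of_lt ht)
    (fun _ ht _ ha => mul_neg_of_pos_of_neg ha ht) (tendsto_rhoM u v) c).limUnder_eq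

lemma rhoM_eq_rhoP_of_forall_birkhoffOrthogonal {α β : ℝ} (hab : α + β ≠ 0) (u v : X)
    (h : ∀ w, BirkhoffOrthogonal u w → rhoAB α β u w = 0) : rhoM u v = rhoP u v := by
  rcases eq_or_ne u 0 with rfl | hu
  · rw [rhoM_zero_left, rhoP_zero_left]
  have hshift : ∀ r : ℝ, -r / ‖u‖ ^ 2 * ‖u‖ ^ 2 = -r := fun r =>
    div_mul_cancel₀ _ (by positivity)
  have hMP := rhoM_le_rhoP u v
  have e₁ := h ((-rhoP u v / ‖u‖ ^ 2) • u + v) <| (birkhoffOrthogonal_iff _ _).2 <| by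
    rw [rhoM_smul_add_self, rhoP_smul_add_self, hshift]
    constructor <;> linarith
  have e₂ := h ((-rhoM u v / ‖u‖ ^ 2) • u + v) <| (birkhoffOrthogonal_iff _ _).2 <| by
    rw [rhoM_smul_add_self, rhoP_smul_add_self, hshift]
    constructor <;> linarith
  rw [rhoAB, rhoM_smul_add_self, rhoP_smul_add_self, hshift] at e₁ e₂
  have hprod : (α + β) * (rhoP u v - rhoM u v) = 0 := by linear_combination e₂ - e₁
  linarith [(mul_eq_zero.1 hprod).resolve_left hab]

lemma birkhoffOrthogonal_iff_rhoAB_eq_zero {α β : ℝ} (hab : α + β ≠ 0) {u v : X}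
    (h : rhoM u v = rhoP u v) : BirkhoffOrthogonal u v ↔ rhoAB α β u v = 0 := by
  rw [birkhoffOrthogonal_iff, rhoAB, h, ← add_mul, mul_eq_zero, or_iff_right hab]
  exact le_antisymm_iff.symm

end NormSqDiffQuot

theorem stmt_8_general {X : Type*} [NormedAddCommGroup X] [NormedSpace ℝ X]
    (α β : ℝ) (hab : 0 < α + β) :
    (∀ u v : X, (∀ t : ℝ, ‖u + t • v‖ ≥ ‖u‖) ↔ rhoAB α β u v = 0) ↔
    (∀ u v : X, rhoM u v = rhoP u v) :=
  ⟨fun h u v => rhoM_eq_rhoP_of_forall_birkhoffOrthogonal hab.ne' u v fun w => (h u w).1,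
    fun h u v => birkhoffOrthogonal_iff_rhoAB_eq_zero hab.ne' (h u v)⟩

theorem stmt_8 {X : Type*} [NormedAddCommGroup X] [NormedSpace ℝ X]
    (α β : ℝ) (hα : α ∈ Set.Ico (0:ℝ) 1) (hβ : β ∈ Set.Ico (0:ℝ) 1)
    (hne : α ≠ β) (hab : 0 < α + β) (hab1 : α + β < 1) :
    (∀ u v : X, (∀ t : ℝ, ‖u + t • v‖ ≥ ‖u‖) ↔ rhoAB α β u v = 0) ↔
    (∀ u v : X, rhoM u v = rhoP u v) :=
  stmt_8_general α β hab
end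

section
/- Let X be a real normed linear space and α, β ∈ [0,1) with 0 < α+β < 1. Then ρ_{α,β}(u,v) = ρ_{α,β}(v,u) for all u, v ∈ X if and only if the norm of X arises from an inner product. -/
open Set Filter Topology

namespace ConvexOn

variable {f g : ℝ → ℝ} {α β : ℝ}

lemma rightDeriv_le_leftDeriv_of_lt (hf : ConvexOn ℝ univ f) {x y : ℝ} (hxy : x < y) :
    derivWithin f (Ioi x) x ≤ derivWithin f (Iio y) y :=
  (hf.rightDeriv_le_slope_of_mem_interior (by simp) (mem_univ y) hxy).trans
    (hf.slope_le_leftDeriv_of_mem_interior (mem_univ x) (by simp) hxy)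

lemma hasDerivAt_of_mul_leftDeriv_add_mul_rightDeriv_eq (hf : ConvexOn ℝ univ f)
    (hα : 0 ≤ α) (hβ : 0 ≤ β) (hαβ : 0 < α + β) (hg : Continuous g)
    (h : ∀ s, α * derivWithin f (Iio s) s + β * derivWithin f (Ioi s) s = g s) (s : ℝ) :
    HasDerivAt f (g s / (α + β)) s := by
  set L := fun x => derivWithin f (Iio x) x
  set R := fun x => derivWithin f (Ioi x) x
  have hLR : ∀ x, L x ≤ R x := fun x => hf.leftDeriv_le_rightDeriv_of_mem_interior (by simp)
  have hRL : ∀ x y, x < y → R x ≤ L y := fun x y => hf.rightDeriv_le_leftDeriv_of_lt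
  have upper : (α + β) * R s ≤ g s := by
    refine ge_of_tendsto (hg.continuousAt.mono_left nhdsWithin_le_nhds : Tendsto g (𝓝[>] s) _) ?_
    filter_upwards [self_mem_nhdsWithin] with r (hr : s < r)
    rw [← h r]
    nlinarith [hRL s r hr, hLR r]
  have lower : g s ≤ (α + β) * L s := by
    refine le_of_tendsto (hg.continuousAt.mono_left nhdsWithin_le_nhds : Tendsto g (𝓝[<] s) _) ?_
    filter_upwards [self_mem_nhdsWithin] with r (hr : r < s)
    rw [← h r]
    nlinarith [hRL r s hr, hLR r]
  have hL : L s = g s / (α + β) := by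
    rw [eq_div_iff hαβ.ne']; nlinarith [hLR s]
  have hR : R s = g s / (α + β) := by
    rw [eq_div_iff hαβ.ne']; nlinarith [hLR s]
  have hleft : HasDerivWithinAt f (L s) (Iio s) s :=
    hf.hasDerivWithinAt_leftDeriv_of_mem_interior (by simp)
  have hright : HasDerivWithinAt f (R s) (Ioi s) s :=
    hf.hasDerivWithinAt_rightDeriv_of_mem_interior (by simp)
  rw [hL] at hleft
  rw [hR] at hright
  rw [← hasDerivWithinAt_univ, ← hasDerivWithinAt_sdiff_singleton, ← compl_eq_univ_sdiff,
    ← Iio_union_Ioi]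
  exact hleft.union hright

end ConvexOn

lemma eq_quadratic_of_hasDerivAt_affine {f : ℝ → ℝ} {a b : ℝ} (hf : ∀ s, HasDerivAt f (a + b * s) s)
    (x : ℝ) : f x = f 0 + a * x + b * x ^ 2 / 2 := by
  set p := fun s : ℝ => a * s + b * s ^ 2 / 2
  have hp : ∀ s, HasDerivAt p (a + b * s) s := fun s =>
    (((hasDerivAt_id s).const_mul a).add
      (((hasDerivAt_pow 2 s).const_mul b).div_const 2)).congr_deriv (by push_cast; ring)
  have hfp : ∀ s, HasDerivAt (f - p) 0 s := fun s => by simpa using (hf s).sub (hp s)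
  have hconst := is_const_of_deriv_eq_zero (fun s => (hfp s).differentiableAt)
    (fun s => (hfp s).deriv) x 0
  simp only [Pi.sub_apply, p] at hconst
  linarith

section NormSqLine

variable {X : Type*} [NormedAddCommGroup X] [NormedSpace ℝ X]

noncomputable def normSqLine (u v : X) (t : ℝ) : ℝ := ‖u + t • v‖ ^ 2 / 2

lemma convexOn_normSqLine (u v : X) : ConvexOn ℝ univ (normSqLine u v) := by
  have hline := (convexOn_norm convex_univ).comp_affineMap (AffineMap.lineMap u (u + v))
  rw [preimage_univ] at hline
  refine ((hline.pow (fun _ _ => norm_nonneg _) 2).smul (c := (2 : ℝ)⁻¹) (by norm_num)).congr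
    fun t _ => ?_
  simp only [Function.comp_apply, Pi.pow_apply, smul_eq_mul, normSqLine,
    AffineMap.lineMap_apply_module]
  rw [show (1 - t) • u + t • (u + v) = u + t • v by module]
  ring

lemma normSqLine_add_smul_left (u v : X) (s : ℝ) :
    normSqLine (u + s • v) v = fun t => normSqLine u v (s + t) := by
  ext t
  simp only [normSqLine, add_smul, add_assoc]

lemma slope_normSqLine (u v : X) :
    slope (normSqLine u v) 0 = fun t : ℝ => (‖u + t • v‖ ^ 2 - ‖u‖ ^ 2) / (2 * t) := by
  ext t
  simp only [slope_def_field, normSqLine, zero_smul, add_zero, sub_zero]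
  ring

lemma rhoP_eq_of_hasDerivWithinAt {u v : X} {d : ℝ}
    (h : HasDerivWithinAt (normSqLine u v) d (Ioi 0) 0) : rhoP u v = d := by
  rw [hasDerivWithinAt_iff_tendsto_slope' self_notMem_Ioi, slope_normSqLine] at h
  exact h.limUnder_eq

lemma rhoM_eq_of_hasDerivWithinAt {u v : X} {d : ℝ}
    (h : HasDerivWithinAt (normSqLine u v) d (Iio 0) 0) : rhoM u v = d := by
  rw [hasDerivWithinAt_iff_tendsto_slope' self_notMem_Iio, slope_normSqLine] at h
  exact h.limUnder_eq

lemma rhoP_add_smul_left (u v : X) (s : ℝ) :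
    rhoP (u + s • v) v = derivWithin (normSqLine u v) (Ioi s) s := by
  apply rhoP_eq_of_hasDerivWithinAt
  rw [normSqLine_add_smul_left]
  have := (convexOn_normSqLine u v).hasDerivWithinAt_rightDeriv_of_mem_interior (x := s) (by simp)
  have hshift : HasDerivWithinAt (fun t : ℝ => s + t) 1 (Ioi 0) 0 :=
    ((hasDerivAt_id (0:ℝ)).const_add s).hasDerivWithinAt
  exact (this.comp_of_eq 0 hshift (fun t ht => by simpa using ht) (by simp)).congr_deriv (mul_one _)

lemma rhoM_add_smul_left (u v : X) (s : ℝ) :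
    rhoM (u + s • v) v = derivWithin (normSqLine u v) (Iio s) s := by
  apply rhoM_eq_of_hasDerivWithinAt
  rw [normSqLine_add_smul_left]
  have := (convexOn_normSqLine u v).hasDerivWithinAt_leftDeriv_of_mem_interior (x := s) (by simp)
  have hshift : HasDerivWithinAt (fun t : ℝ => s + t) 1 (Iio 0) 0 :=
    ((hasDerivAt_id (0:ℝ)).const_add s).hasDerivWithinAt
  exact (this.comp_of_eq 0 hshift (fun t ht => by simpa using ht) (by simp)).congr_deriv (mul_one _)

lemma normSqLine_add_smul_right (v u : X) (s : ℝ) {t : ℝ} (ht : 0 < 1 + t * s) :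
    normSqLine v (u + s • v) t = (1 + t * s) ^ 2 * normSqLine v u (t / (1 + t * s)) := by
  have hvec : v + t • (u + s • v) = (1 + t * s) • (v + (t / (1 + t * s)) • u) := by
    rw [smul_add (1 + t * s), smul_smul, mul_div_cancel₀ _ ht.ne']
    module
  rw [normSqLine, normSqLine, hvec, norm_smul, Real.norm_of_nonneg ht.le]
  ring

lemma hasDerivWithinAt_normSqLine_add_smul_right {S : Set ℝ}
    (hS : ∀ t ∈ S, ∀ c : ℝ, 0 < c → t / c ∈ S) {v u : X} {d : ℝ} (s : ℝ)
    (h : HasDerivWithinAt (normSqLine v u) d S 0) :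
    HasDerivWithinAt (normSqLine v (u + s • v)) (d + s * ‖v‖ ^ 2) S 0 := by
  set U := {t : ℝ | 0 < 1 + t * s}
  have hU : U ∈ 𝓝 0 :=
    (isOpen_lt continuous_const (by fun_prop)).mem_nhds (by simp)
  rw [← hasDerivWithinAt_inter hU]
  have hσ : HasDerivWithinAt (fun t : ℝ => t / (1 + t * s)) 1 (S ∩ U) 0 := by
    have := (hasDerivAt_id (0:ℝ)).div (((hasDerivAt_id (0:ℝ)).mul_const s).const_add 1)
      (by simp)
    exact (this.congr_deriv (by simp)).hasDerivWithinAt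
  have hsq : HasDerivWithinAt (fun t : ℝ => (1 + t * s) ^ 2) (2 * s) (S ∩ U) 0 := by
    have := (((hasDerivAt_id (0:ℝ)).mul_const s).const_add 1).pow 2
    exact (this.congr_deriv (by simp)).hasDerivWithinAt
  have hcomp := h.comp_of_eq 0 hσ (fun t ht => hS t ht.1 _ ht.2) (by simp)
  refine ((hsq.mul hcomp).congr (fun t ht => normSqLine_add_smul_right v u s ht.2)
    (normSqLine_add_smul_right v u s (by simp))).congr_deriv ?_
  simp [normSqLine]
  ring

lemma hasDerivWithinAt_Ioi_rhoP (u v : X) :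
    HasDerivWithinAt (normSqLine u v) (rhoP u v) (Ioi 0) 0 := by
  have h := (convexOn_normSqLine u v).hasDerivWithinAt_rightDeriv_of_mem_interior (x := 0)
    (by simp)
  rwa [← rhoP_eq_of_hasDerivWithinAt h] at h

lemma hasDerivWithinAt_Iio_rhoM (u v : X) :
    HasDerivWithinAt (normSqLine u v) (rhoM u v) (Iio 0) 0 := by
  have h := (convexOn_normSqLine u v).hasDerivWithinAt_leftDeriv_of_mem_interior (x := 0)
    (by simp)
  rwa [← rhoM_eq_of_hasDerivWithinAt h] at h

lemma rhoP_add_smul_right (v u : X) (s : ℝ) : rhoP v (u + s • v) = rhoP v u + s * ‖v‖ ^ 2 :=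
  rhoP_eq_of_hasDerivWithinAt <| hasDerivWithinAt_normSqLine_add_smul_right
    (fun _ ht _ hc => div_pos ht hc) s (hasDerivWithinAt_Ioi_rhoP v u)

lemma rhoM_add_smul_right (v u : X) (s : ℝ) : rhoM v (u + s • v) = rhoM v u + s * ‖v‖ ^ 2 :=
  rhoM_eq_of_hasDerivWithinAt <| hasDerivWithinAt_normSqLine_add_smul_right
    (fun _ ht _ hc => div_neg_of_neg_of_pos ht hc) s (hasDerivWithinAt_Iio_rhoM v u)

lemma rhoAB_add_smul_left (α β : ℝ) (u v : X) (s : ℝ) :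
    rhoAB α β (u + s • v) v =
      α * derivWithin (normSqLine u v) (Iio s) s + β * derivWithin (normSqLine u v) (Ioi s) s := by
  rw [rhoAB, rhoM_add_smul_left, rhoP_add_smul_left]

lemma rhoAB_add_smul_right (α β : ℝ) (v u : X) (s : ℝ) :
    rhoAB α β v (u + s • v) = rhoAB α β v u + (α + β) * ‖v‖ ^ 2 * s := by
  rw [rhoAB, rhoAB, rhoM_add_smul_right, rhoP_add_smul_right]
  ring

lemma parallelogram_law_of_rhoAB_symm {α β : ℝ} (hα : 0 ≤ α) (hβ : 0 ≤ β) (hαβ : 0 < α + β)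
    (hsymm : ∀ u v : X, rhoAB α β u v = rhoAB α β v u) (u v : X) :
    ‖u + v‖ * ‖u + v‖ + ‖u - v‖ * ‖u - v‖ = 2 * (‖u‖ * ‖u‖ + ‖v‖ * ‖v‖) := by
  have hderiv (s : ℝ) :
      HasDerivAt (normSqLine u v) (rhoAB α β v u / (α + β) + ‖v‖ ^ 2 * s) s := by
    have := (convexOn_normSqLine u v).hasDerivAt_of_mul_leftDeriv_add_mul_rightDeriv_eq hα hβ hαβ
      (g := fun s => rhoAB α β v u + (α + β) * ‖v‖ ^ 2 * s) (by fun_prop)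
      (fun s => by rw [← rhoAB_add_smul_left, hsymm, rhoAB_add_smul_right]) s
    exact this.congr_deriv (by field_simp)
  have h1 := eq_quadratic_of_hasDerivAt_affine hderiv 1
  have h2 := eq_quadratic_of_hasDerivAt_affine hderiv (-1)
  simp only [normSqLine, zero_smul, one_smul, neg_smul, add_zero, ← sub_eq_add_neg] at h1 h2
  nlinarith

lemma rhoAB_eq_of_bilin (f : X →ₗ[ℝ] X →ₗ[ℝ] ℝ) (hsymm : ∀ u v, f u v = f v u)
    (hnorm : ∀ u, f u u = ‖u‖ ^ 2) (α β : ℝ) (u v : X) : rhoAB α β u v = (α + β) * f u v := by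
  have hline : normSqLine u v = fun t => ‖u‖ ^ 2 / 2 + f u v * t + ‖v‖ ^ 2 / 2 * t ^ 2 := by
    ext t
    rw [normSqLine, ← hnorm, ← hnorm, ← hnorm]
    simp only [map_add, map_smul, LinearMap.add_apply, LinearMap.smul_apply, smul_eq_mul,
      hsymm v u]
    ring
  have hderiv : HasDerivAt (normSqLine u v) (f u v) 0 := by
    rw [hline]
    exact ((((hasDerivAt_id (0:ℝ)).const_mul (f u v)).const_add _).add
      ((hasDerivAt_pow 2 (0:ℝ)).const_mul _)).congr_deriv (by simp)
  rw [rhoAB, rhoM_eq_of_hasDerivWithinAt hderiv.hasDerivWithinAt,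
    rhoP_eq_of_hasDerivWithinAt hderiv.hasDerivWithinAt]
  ring

end NormSqLine

theorem stmt_12_general {X : Type*} [NormedAddCommGroup X] [NormedSpace ℝ X]
    (α β : ℝ) (hα : α ∈ Set.Ico (0:ℝ) 1) (hβ : β ∈ Set.Ico (0:ℝ) 1)
    (hab : 0 < α + β) :
    (∀ u v : X, rhoAB α β u v = rhoAB α β v u) ↔
    (∃ f : X →ₗ[ℝ] X →ₗ[ℝ] ℝ, (∀ u v : X, f u v = f v u) ∧ ∀ u : X, f u u = ‖u‖^2) := by
  constructor
  · intro hsymm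
    let _ : InnerProductSpace ℝ X :=
      .ofNorm ℝ (parallelogram_law_of_rhoAB_symm hα.1 hβ.1 hab hsymm)
    exact ⟨innerₗ X, fun u v => real_inner_comm v u, real_inner_self_eq_norm_sq⟩
  · rintro ⟨f, hsymm, hnorm⟩ u v
    rw [rhoAB_eq_of_bilin f hsymm hnorm, rhoAB_eq_of_bilin f hsymm hnorm, hsymm]

theorem stmt_12 {X : Type*} [NormedAddCommGroup X] [NormedSpace ℝ X]
    (α β : ℝ) (hα : α ∈ Set.Ico (0:ℝ) 1) (hβ : β ∈ Set.Ico (0:ℝ) 1)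
    (hab : 0 < α + β) (hab1 : α + β < 1) :
    (∀ u v : X, rhoAB α β u v = rhoAB α β v u) ↔
    (∃ f : X →ₗ[ℝ] X →ₗ[ℝ] ℝ, (∀ u v : X, f u v = f v u) ∧ ∀ u : X, f u u = ‖u‖^2) :=
  stmt_12_general α β hα hβ hab
end
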